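/- arXiv:1809.10405 — 3 statements merged into one kernel-verified Lean document; each statement's English description precedes it below -/
import Mathlib

section
/- Let T be an integer with |T| > 11, let ϑ be a root of the irreducible polynomial x⁸ + (4T⁴ + 2)x⁴ + 1, set K = Q(ϑ), and let O = Z[i][ϑ] be the order of K generated by ϑ over the Gaussian integers Z[i]. Then O admits no power integral basis: there is no element α ∈ O with Z[α] = O. -/
open Polynomial Module Submodule

/-!
Every `x ∈ O = ℤ[i][ϑ]` satisfies `x⁴ ≡ m (mod 2O)` for some integer `m`: this holds for `i`
and for `ϑ`, because `ϑ⁴ + 1 = ±2T²iϑ²`, and `x ↦ x⁴` is additive and multiplicative modulo `2`.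
If `O = ℤ[α]`, reducing `α⁴` shows that `O/2O` is spanned over `𝔽₂` by `1, α, α², α³`.
But `ϑ` has degree `8` over `ℚ`, so `O` is free over `ℤ` with basis `iʲϑᵏ` (`j < 2`, `k < 4`)
and `O/2O` has dimension `8`.
-/

theorem Subring.closure_preimage_coe_eq_top {R : Type*} [Ring R] {O : Subring R} {s : Set R}
    (hs : Subring.closure s = O) : Subring.closure (((↑) : O → R) ⁻¹' s) = ⊤ := by
  subst hs
  refine eq_top_iff.2 fun x _ => ?_
  have hmap : (Subring.closure (((↑) : Subring.closure s → R) ⁻¹' s)).map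
      (Subring.closure s).subtype = Subring.closure s := by
    rw [RingHom.map_closure, Subring.coe_subtype, Set.image_preimage_eq_of_subset
      (by rw [Subtype.range_coe_subtype]; exact Subring.subset_closure)]
  obtain ⟨y, hy, hyx⟩ : (x : R) ∈ (Subring.closure (((↑) : Subring.closure s → R) ⁻¹' s)).map
      (Subring.closure s).subtype := by rw [hmap]; exact x.2
  rwa [Subtype.ext hyx] at hy

theorem exists_pow_sub_intCast_mem_span_of_closure_eq_top {O : Type*} [CommRing O] {p : ℕ}
    (hp : p.Prime) (k : ℕ) {s : Set O} (hs : Subring.closure s = ⊤)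
    (h : ∀ x ∈ s, ∃ m : ℤ, x ^ p ^ k - m ∈ Ideal.span {(p : O)}) (x : O) :
    ∃ m : ℤ, x ^ p ^ k - m ∈ Ideal.span {(p : O)} := by
  induction (hs ▸ Subring.mem_top x : x ∈ Subring.closure s) using Subring.closure_induction with
  | mem x hx => exact h x hx
  | zero => exact ⟨0, by simp [hp.ne_zero]⟩
  | one => exact ⟨1, by simp⟩
  | add x y _ _ hx hy =>
    obtain ⟨a, ha⟩ := hx
    obtain ⟨b, hb⟩ := hy
    obtain ⟨r, hr⟩ := exists_add_pow_prime_pow_eq hp x y k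
    refine ⟨a + b, ?_⟩
    have : (x + y) ^ p ^ k - ↑(a + b) = (x ^ p ^ k - a) + (y ^ p ^ k - b) + p * (x * y * r) := by
      rw [hr]; push_cast; ring
    rw [this]
    exact add_mem (add_mem ha hb) (Ideal.mul_mem_right _ _ (Ideal.subset_span rfl))
  | neg x _ hx =>
    obtain ⟨a, ha⟩ := hx
    refine ⟨(-1) ^ p ^ k * a, ?_⟩
    have : (-x) ^ p ^ k - ↑((-1) ^ p ^ k * a) = (-1) ^ p ^ k * (x ^ p ^ k - a) := by
      push_cast; ring
    rw [this]
    exact Ideal.mul_mem_left _ _ ha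
  | mul x y _ _ hx hy =>
    obtain ⟨a, ha⟩ := hx
    obtain ⟨b, hb⟩ := hy
    refine ⟨a * b, ?_⟩
    have : (x * y) ^ p ^ k - ↑(a * b) = x ^ p ^ k * (y ^ p ^ k - b) + b * (x ^ p ^ k - a) := by
      push_cast; ring
    rw [this]
    exact add_mem (Ideal.mul_mem_left _ _ hb) (Ideal.mul_mem_left _ _ ha)

theorem Subring.closure_subset_span {R ι : Type*} [Ring R] {s : Set R} {v : ι → R}
    (h1 : 1 ∈ span ℤ (Set.range v)) (hs : ∀ x ∈ s, ∀ i, x * v i ∈ span ℤ (Set.range v)) :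
    (Subring.closure s : Set R) ⊆ span ℤ (Set.range v) := by
  let M := span ℤ (Set.range v)
  let S : Subring R :=
    { carrier := {x | ∀ y ∈ M, x * y ∈ M}
      one_mem' := by simp
      mul_mem' := fun hx hy z hz => by rw [mul_assoc]; exact hx _ (hy z hz)
      zero_mem' := by simp
      add_mem' := fun hx hy z hz => by rw [add_mul]; exact add_mem (hx z hz) (hy z hz)
      neg_mem' := fun hx z hz => by rw [neg_mul]; exact neg_mem (hx z hz) }
  have hsS : s ⊆ S := fun x hx y hy => by
    induction hy using span_induction with
    | mem y hy => obtain ⟨i, rfl⟩ := hy; exact hs x hx i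
    | zero => simp
    | add y z _ _ hy hz => rw [mul_add]; exact add_mem hy hz
    | smul n y _ hy => rw [mul_smul_comm]; exact M.smul_mem n hy
  intro x hx
  simpa using Subring.closure_le.2 hsS hx 1 h1

theorem Module.Basis.card_le_of_closure_eq_top {O ι : Type*} [CommRing O] [Fintype ι]
    (b : Basis ι ℤ O) (p : ℕ) [Fact p.Prime] {α : O} (hα : Subring.closure {α} = ⊤)
    {n : ℕ} (hn : n ≠ 0) {m : ℤ} (hαn : α ^ n - m ∈ Ideal.span {(p : O)}) :
    Fintype.card ι ≤ n := by
  let φ : O →+ (ι →₀ ZMod p) :=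
    (Finsupp.mapRange.addMonoidHom (Int.castAddHom (ZMod p))).comp b.repr.toAddMonoidHom
  have hφ : Function.Surjective φ :=
    (Finsupp.mapRange_surjective _ (map_zero _) ZMod.intCast_surjective).comp b.repr.surjective
  have hφp (y : O) : φ (p * y) = 0 := by
    rw [← nsmul_eq_mul, map_nsmul, ← Nat.cast_smul_eq_nsmul (ZMod p), ZMod.natCast_self,
      zero_smul]
  let W := span (ZMod p) ((Finset.range n).image fun k => φ (α ^ k) : Set (ι →₀ ZMod p))
  have hW (x : O) : φ x ∈ W := by
    obtain ⟨q, rfl⟩ : ∃ q : ℤ[X], aeval α q = x := by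
      rw [← AlgHom.mem_range, ← Algebra.adjoin_singleton_eq_range_aeval, Algebra.adjoin_int, hα]
      trivial
    obtain ⟨y, hy⟩ := Ideal.mem_span_singleton'.1 hαn
    have hX : aeval α (X ^ n - C m) = p * y := by simp [← hy, mul_comm]
    have hmonic : (X ^ n - C m).Monic := monic_X_pow_sub_C m hn
    have hdeg : (q %ₘ (X ^ n - C m)).natDegree < n := by
      have hne : X ^ n - C m ≠ 1 := fun h => hn (by
        rw [← natDegree_X_pow_sub_C (n := n) (r := m), h, natDegree_one])
      simpa only [natDegree_X_pow_sub_C] using natDegree_modByMonic_lt q hmonic hne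
    rw [← modByMonic_add_div q (X ^ n - C m), map_add, map_mul, hX, mul_assoc,
      map_add, hφp, add_zero, aeval_eq_sum_range' hdeg, map_sum]
    refine sum_mem fun k hk => ?_
    rw [map_zsmul]
    exact zsmul_mem (subset_span (Finset.mem_coe.2 (Finset.mem_image_of_mem _ hk))) _
  have htop : W = ⊤ := eq_top_iff.2 fun v _ => by
    obtain ⟨x, rfl⟩ := hφ v
    exact hW x
  calc Fintype.card ι = finrank (ZMod p) W := by rw [htop, finrank_top, finrank_finsupp_self]
    _ ≤ ((Finset.range n).image fun k => φ (α ^ k)).card := finrank_span_finset_le_card _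
    _ ≤ n := Finset.card_image_le.trans (Finset.card_range n).le

noncomputable def Subring.basisOfLinearIndependent {R ι : Type*} [Ring R] (O : Subring R)
    {v : ι → R} (hv : LinearIndependent ℤ v) (hO : (span ℤ (Set.range v) : Set R) = O) :
    Basis ι ℤ O :=
  have hvO (i : ι) : v i ∈ O := by
    rw [← SetLike.mem_coe, ← hO]
    exact subset_span (Set.mem_range_self i)
  Basis.mk (v := fun i => ⟨v i, hvO i⟩) (hv.of_comp O.subtype.toAddMonoidHom.toIntLinearMap)
    (fun x _ => by
      have hx : (x : R) ∈ (span ℤ (Set.range fun i => (⟨v i, hvO i⟩ : O))).map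
          O.subtype.toAddMonoidHom.toIntLinearMap := by
        rw [map_span, ← Set.range_comp, ← SetLike.mem_coe]
        exact hO ▸ x.2
      obtain ⟨y, hy, hyx⟩ := hx
      rwa [Subtype.ext hyx] at hy)

def gaussianMonomial (ϑ : ℂ) (jk : Fin 2 × Fin 4) : ℂ :=
  Complex.I ^ (jk.1 : ℕ) * ϑ ^ (jk.2 : ℕ)

theorem span_gaussianMonomial_eq_closure {ϑ : ℂ} {c : ℤ}
    (hc : ϑ ^ 4 + 1 = 2 * c * Complex.I * ϑ ^ 2) :
    (span ℤ (Set.range (gaussianMonomial ϑ)) : Set ℂ) = Subring.closure {Complex.I, ϑ} := by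
  let M := span ℤ (Set.range (gaussianMonomial ϑ))
  have hv (i) : gaussianMonomial ϑ i ∈ M := subset_span (Set.mem_range_self i)
  have hI (i) : Complex.I * gaussianMonomial ϑ i ∈ M := by
    obtain ⟨j, k⟩ := i
    fin_cases j
    · simpa [gaussianMonomial] using hv (1, k)
    · simpa [gaussianMonomial, ← mul_assoc] using neg_mem (hv (0, k))
  have hϑ (i) : ϑ * gaussianMonomial ϑ i ∈ M := by
    obtain ⟨j, k⟩ := i
    by_cases hk : (k : ℕ) + 1 < 4
    · convert hv (j, ⟨k + 1, hk⟩) using 1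
      simp only [gaussianMonomial]
      ring
    · obtain rfl : k = 3 := by omega
      have : ϑ * gaussianMonomial ϑ (j, 3)
          = -gaussianMonomial ϑ (j, 0) + (2 * c) • (Complex.I * gaussianMonomial ϑ (j, 2)) := by
        simp only [gaussianMonomial, zsmul_eq_mul]
        norm_num
        linear_combination Complex.I ^ (j : ℕ) * hc
      rw [this]
      exact add_mem (neg_mem (hv _)) (M.smul_mem _ (hI _))
  refine subset_antisymm ?_
    (Subring.closure_subset_span (by simpa [gaussianMonomial] using hv (0, 0)) ?_)
  · exact span_le (p := (Subring.closure {Complex.I, ϑ}).toAddSubgroup.toIntSubmodule).2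
      (Set.range_subset_iff.2 fun i => (mul_mem (pow_mem (Subring.subset_closure (by simp)) _)
        (pow_mem (Subring.subset_closure (by simp)) _) : _ ∈ Subring.closure {Complex.I, ϑ}))
  · rintro x (rfl | rfl)
    exacts [hI, hϑ]

theorem linearIndependent_gaussianMonomial {ϑ : ℂ} {c : ℤ}
    (hc : ϑ ^ 4 + 1 = 2 * c * Complex.I * ϑ ^ 2) (hdeg : (minpoly ℚ ϑ).natDegree = 8) :
    LinearIndependent ℤ (gaussianMonomial ϑ) := by
  refine LinearIndependent.restrict_scalars' (K := ℚ) ℤ ?_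
  have hpow : span ℚ (Set.range fun k : Fin (minpoly ℚ ϑ).natDegree => ϑ ^ (k : ℕ))
      ≤ span ℚ (Set.range (gaussianMonomial ϑ)) := by
    refine span_le.2 (Set.range_subset_iff.2 fun k => span_le_restrictScalars ℤ ℚ _ ?_)
    rw [← SetLike.mem_coe, span_gaussianMonomial_eq_closure hc]
    exact pow_mem (Subring.subset_closure (by simp)) _
  refine linearIndependent_iff_card_eq_finrank_span.2 (le_antisymm ?_ (finrank_range_le_card _))
  calc Fintype.card (Fin 2 × Fin 4) = (minpoly ℚ ϑ).natDegree := by simp [hdeg]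
    _ = finrank ℚ (span ℚ (Set.range fun k : Fin (minpoly ℚ ϑ).natDegree => ϑ ^ (k : ℕ))) := by
      rw [finrank_span_eq_card (linearIndependent_pow ϑ), Fintype.card_fin]
    _ ≤ _ :=
      have := FiniteDimensional.span_of_finite ℚ (Set.finite_range (gaussianMonomial ϑ))
      finrank_mono hpow

theorem natDegree_minpoly_eq_eight {T : ℤ}
    (hirr : Irreducible (X ^ 8 + C (((4 * T ^ 4 + 2 : ℤ) : ℚ)) * X ^ 4 + 1 : ℚ[X]))
    {ϑ : ℂ} (hϑ : ϑ ^ 8 + (4 * (T : ℂ) ^ 4 + 2) * ϑ ^ 4 + 1 = 0) :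
    (minpoly ℚ ϑ).natDegree = 8 := by
  have hmonic : (X ^ 8 + C (((4 * T ^ 4 + 2 : ℤ) : ℚ)) * X ^ 4 + 1 : ℚ[X]).Monic := by
    monicity!
  rw [← minpoly.eq_of_irreducible_of_monic hirr (by simp [hϑ]) hmonic]
  compute_degree!

theorem exists_pow_four_add_one_eq {T : ℤ} {ϑ : ℂ}
    (hϑ : ϑ ^ 8 + (4 * (T : ℂ) ^ 4 + 2) * ϑ ^ 4 + 1 = 0) :
    ∃ c : ℤ, ϑ ^ 4 + 1 = 2 * c * Complex.I * ϑ ^ 2 := by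
  have hfac : (ϑ ^ 4 + 1 - 2 * T ^ 2 * Complex.I * ϑ ^ 2)
      * (ϑ ^ 4 + 1 + 2 * T ^ 2 * Complex.I * ϑ ^ 2) = 0 := by
    linear_combination hϑ - 4 * (T : ℂ) ^ 4 * ϑ ^ 4 * Complex.I_sq
  rcases mul_eq_zero.1 hfac with h | h
  · exact ⟨T ^ 2, by push_cast; linear_combination h⟩
  · exact ⟨-T ^ 2, by push_cast; linear_combination h⟩

theorem exists_pow_four_sub_intCast_mem_span_two {ϑ : ℂ} {c : ℤ}
    (hc : ϑ ^ 4 + 1 = 2 * c * Complex.I * ϑ ^ 2) (x : Subring.closure {Complex.I, ϑ}) :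
    ∃ m : ℤ, x ^ 2 ^ 2 - m ∈ Ideal.span {((2 : ℕ) : Subring.closure {Complex.I, ϑ})} := by
  have htop := Subring.closure_preimage_coe_eq_top (O := Subring.closure {Complex.I, ϑ}) rfl
  refine exists_pow_sub_intCast_mem_span_of_closure_eq_top Nat.prime_two 2 htop ?_ x
  intro y hy
  simp only [Set.mem_preimage, Set.mem_insert_iff, Set.mem_singleton_iff] at hy
  rcases hy with hy | hy
  · refine ⟨1, ?_⟩
    convert zero_mem (Ideal.span _)
    apply Subtype.ext
    simp [hy]
  · refine ⟨-1, Ideal.mem_span_singleton'.2 ⟨⟨c * Complex.I * ϑ ^ 2, ?_⟩, ?_⟩⟩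
    · exact mul_mem (mul_mem (intCast_mem _ c) (Subring.subset_closure (by simp)))
        (pow_mem (Subring.subset_closure (by simp)) 2)
    · apply Subtype.ext
      simp only [Subring.coe_mul, Subring.coe_natCast]
      push_cast [hy]
      linear_combination -hc

theorem stmt_5_general (T : ℤ)
    (hirr : Irreducible (X ^ 8 + C (((4 * T ^ 4 + 2 : ℤ) : ℚ)) * X ^ 4 + 1 : ℚ[X]))
    (ϑ : ℂ) (hϑ : ϑ ^ 8 + (4 * (T : ℂ) ^ 4 + 2) * ϑ ^ 4 + 1 = 0) :
    ¬ ∃ α ∈ Subring.closure {Complex.I, ϑ},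
        Subring.closure {α} = Subring.closure {Complex.I, ϑ} := by
  rintro ⟨α, hα, hgen⟩
  obtain ⟨c, hc⟩ := exists_pow_four_add_one_eq hϑ
  let b := (Subring.closure {Complex.I, ϑ}).basisOfLinearIndependent
    (linearIndependent_gaussianMonomial hc (natDegree_minpoly_eq_eight hirr hϑ))
    (span_gaussianMonomial_eq_closure hc)
  obtain ⟨m, hm⟩ := exists_pow_four_sub_intCast_mem_span_two hc ⟨α, hα⟩
  have hgen' : Subring.closure {(⟨α, hα⟩ : Subring.closure {Complex.I, ϑ})} = ⊤ := by
    rw [← Subring.closure_preimage_coe_eq_top hgen]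
    congr 1
    ext y
    simp [Subtype.ext_iff]
  exact absurd (b.card_le_of_closure_eq_top 2 hgen' (by norm_num) hm) (by simp)

/-- For an integer `T` with `|T| > 11` and `ϑ` a root of the
irreducible polynomial `x⁸ + (4T⁴ + 2)x⁴ + 1`, the order `O = ℤ[i][ϑ]` admits
no power integral basis: there is no `α ∈ O` with `ℤ[α] = O`. -/
theorem stmt_5 (T : ℤ) (hT : 11 < |T|)
    (hirr : Irreducible (X ^ 8 + C (((4 * T ^ 4 + 2 : ℤ) : ℚ)) * X ^ 4 + 1 : ℚ[X]))
    (ϑ : ℂ) (hϑ : ϑ ^ 8 + (4 * (T : ℂ) ^ 4 + 2) * ϑ ^ 4 + 1 = 0) :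
    ¬ ∃ α ∈ Subring.closure {Complex.I, ϑ},
        Subring.closure {α} = Subring.closure {Complex.I, ϑ} :=
  stmt_5_general T hirr ϑ hϑ
end

section
/- Let d > 0 be a squarefree integer with −d ≡ 2 or 3 (mod 4), and set M = Q(i√d) with ring of integers Z_M = Z[i√d]. Let t ∈ Z_M be a parameter with |t| > 245 such that the polynomial x⁴ − t²x² + 1 is irreducible over M, let ξ be a root of x⁴ − t²x² + 1, and let O = Z_M[ξ] be the order generated by ξ over Z_M in the octic field K = M(ξ). Then O admits no power integral basis: there is no element α ∈ O with Z[α] = O. -/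
open Polynomial

/-- The imaginary quadratic field `M = ℚ(i√d)` realized inside `ℂ`. -/
noncomputable def Mfield (d : ℤ) : IntermediateField ℚ ℂ :=
  IntermediateField.adjoin ℚ {(Complex.I * (Real.sqrt (d : ℝ) : ℂ) : ℂ)}

/-!
Reduce modulo `2`. Let `k` be an algebraically closed field of characteristic `2` and
`B = k ⊕ k²` the trivial square-zero extension, in which every square lies in `k`. Writing
`t = p(i√d)` with `p ∈ ℤ[Y]`, there are `y = ε + (0, 1)` and `x = λ + (1, 0)` in `B` with
`y² + d = 0` and `x⁴ - p(y)² x² + 1 = 0`. As `ξ` has degree `4` over `M`, these two relations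
generate all integral relations between `i√d` and `ξ`, so `i√d ↦ y`, `ξ ↦ x` is a ring
homomorphism `O → B`. But for every `q ∈ B` the nilpotent parts of the elements of `ℤ[q]` lie
on the line `k · q.snd`, while those of `x` and `y` span `k²`; so no `α ∈ O` generates `O`.
-/

namespace TrivSqZeroExt

section

variable {R M : Type*} [CommRing R] [AddCommGroup M] [Module R M] [Module Rᵐᵒᵖ M]
  [IsCentralScalar R M]

theorem snd_mem_span_of_mem_closure_singleton {q x : TrivSqZeroExt R M}
    (hx : x ∈ Subring.closure {q}) : x.snd ∈ R ∙ q.snd := by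
  induction hx using Subring.closure_induction with
  | mem x hx => rw [Set.mem_singleton_iff.mp hx]; exact Submodule.mem_span_singleton_self _
  | zero => simp
  | one => simp
  | add x y _ _ hx hy => simpa using add_mem hx hy
  | neg x _ hx => simpa using neg_mem hx
  | mul x y _ _ hx hy =>
    rw [snd_mul, op_smul_eq_smul]
    exact add_mem (Submodule.smul_mem _ _ hy) (Submodule.smul_mem _ _ hx)

theorem sq_eq_inl_fst_sq [CharP R 2] (x : TrivSqZeroExt R M) : x ^ 2 = inl (x.fst ^ 2) := by
  ext
  · simp
  · rw [sq, snd_mul, op_smul_eq_smul, ← two_smul R, CharTwo.two_eq_zero, zero_smul, snd_inl]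

end

theorem snd_cross_eq_of_mem_closure_singleton {k : Type*} [CommRing k]
    {q x y : TrivSqZeroExt k (k × k)} (hx : x ∈ Subring.closure {q})
    (hy : y ∈ Subring.closure {q}) : x.snd.1 * y.snd.2 = x.snd.2 * y.snd.1 := by
  obtain ⟨s, hs⟩ := Submodule.mem_span_singleton.mp (snd_mem_span_of_mem_closure_singleton hx)
  obtain ⟨s', hs'⟩ := Submodule.mem_span_singleton.mp (snd_mem_span_of_mem_closure_singleton hy)
  rw [← hs, ← hs']
  simp only [Prod.smul_fst, Prod.smul_snd, smul_eq_mul]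
  ring

theorem exists_sq_add_eq_zero_and_quartic_eq_zero {k : Type*} [Field k] [IsAlgClosed k]
    [CharP k 2] (d : ℤ) (p : ℤ[X]) :
    ∃ y x : TrivSqZeroExt k (k × k), y.snd = (0, 1) ∧ x.snd = (1, 0) ∧ y ^ 2 + d = 0 ∧
      x ^ 4 - aeval y p ^ 2 * x ^ 2 + 1 = 0 := by
  obtain ⟨ε, hε⟩ := IsAlgClosed.exists_eq_mul_self (-d : k)
  set y : TrivSqZeroExt k (k × k) := inl ε + inr (0, 1)
  obtain ⟨l, hl⟩ := IsAlgClosed.exists_root (X ^ 4 - C ((aeval y p).fst ^ 2) * X ^ 2 + 1)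
    (ne_of_eq_of_ne (by compute_degree!) (by decide : (4 : WithBot ℕ) ≠ 0))
  refine ⟨y, inl l + inr (1, 0), by simp [y], by simp, ?_, ?_⟩
  · rw [sq_eq_inl_fst_sq, ← inl_intCast, ← inl_add, ← inl_zero]
    simp [y, sq, ← hε]
  · rw [show ∀ x : TrivSqZeroExt k (k × k), x ^ 4 = (x ^ 2) ^ 2 from fun x ↦ by ring,
      sq_eq_inl_fst_sq, sq_eq_inl_fst_sq, sq_eq_inl_fst_sq, ← inl_mul, ← inl_sub, ← inl_one,
      ← inl_add, ← inl_zero]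
    congr 1
    simpa [← pow_mul] using hl

end TrivSqZeroExt

theorem RingHom.mem_closure_image_of_ker_le {A B C : Type*} [Ring A] [Ring B] [Ring C]
    {f : A →+* B} {ψ : A →+* C} (h : RingHom.ker f ≤ RingHom.ker ψ) {s : Set A} {x : A}
    (hx : f x ∈ Subring.closure (f '' s)) : ψ x ∈ Subring.closure (ψ '' s) := by
  rw [← RingHom.map_closure] at hx ⊢
  obtain ⟨y, hy, hxy⟩ := hx
  refine ⟨y, hy, ?_⟩
  have : x - y ∈ RingHom.ker ψ := h (by rw [RingHom.mem_ker, map_sub, hxy, sub_self])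
  rwa [RingHom.mem_ker, map_sub, sub_eq_zero, eq_comm] at this

namespace Polynomial

theorem ker_le_ker_of_monic {A B C : Type*} [CommRing A] [Nontrivial A] [Ring B] [Ring C]
    {f : A[X] →+* B} {ψ : A[X] →+* C} {F : A[X]} (hF : F.Monic) (hfF : f F = 0)
    (hψF : ψ F = 0) (hlow : ∀ r : A[X], r.degree < F.degree → f r = 0 → ψ r = 0) :
    RingHom.ker f ≤ RingHom.ker ψ := by
  intro p hp
  rw [RingHom.mem_ker] at hp ⊢
  have hdiv := modByMonic_add_div p F
  have hr : f (p %ₘ F) = 0 := by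
    simpa [hfF, hp] using congrArg f hdiv
  rw [← hdiv, map_add, map_mul, hψF, zero_mul, add_zero]
  exact hlow _ (degree_modByMonic_lt p hF) hr

theorem ker_eval₂RingHom_le_of_irreducible {A K L B : Type*} [CommRing A] [Nontrivial A]
    [Field K] [CommRing L] [Nontrivial L] [Algebra K L] [CommRing B]
    {f : A →+* K} {ψ : A →+* B} (hfψ : RingHom.ker f ≤ RingHom.ker ψ)
    {F : A[X]} (hF : F.Monic) (hirr : Irreducible (F.map f)) {ξ : L}
    (hξ : aeval ξ (F.map f) = 0) {x : B} (hx : F.eval₂ ψ x = 0) :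
    RingHom.ker (eval₂RingHom ((algebraMap K L).comp f) ξ) ≤
      RingHom.ker (eval₂RingHom ψ x) := by
  have hmin : F.map f = minpoly K ξ := minpoly.eq_of_irreducible_of_monic hirr hξ (hF.map f)
  refine ker_le_ker_of_monic hF (by simpa [aeval_def, eval₂_map] using hξ) hx fun r hr hfr ↦ ?_
  have hr0 : r.map f = 0 := by
    refine eq_zero_of_dvd_of_degree_lt (hmin ▸ minpoly.dvd K ξ ?_) ?_
    · exact degree_map_le.trans_lt (hF.degree_map f ▸ hr)
    · simpa [aeval_def, eval₂_map] using hfr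
  have : r.map ψ = 0 := by
    ext i
    simpa using hfψ (by simpa using congrArg (coeff · i) hr0)
  simpa [eval_map] using congrArg (eval x) this

end Polynomial

namespace Mfield

noncomputable def gen (d : ℤ) : Mfield d :=
  IntermediateField.AdjoinSimple.gen ℚ _

theorem coe_gen (d : ℤ) : (gen d : ℂ) = Complex.I * (√(d : ℝ) : ℂ) := rfl

theorem exists_aeval_gen_eq {d : ℤ} {t : Mfield d}
    (ht : (t : ℂ) ∈ Subring.closure {Complex.I * (√(d : ℝ) : ℂ)}) :
    ∃ p : ℤ[X], aeval (gen d) p = t := by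
  obtain ⟨p, hp⟩ :=
    (Subring.closure_le (t := (aeval (R := ℤ) (gen d : ℂ)).toRingHom.range)).2
      (Set.singleton_subset_iff.2 ⟨X, aeval_X _⟩) ht
  exact ⟨p, Subtype.ext (hp ▸ (aeval_algebraMap_apply ℂ (gen d) p).symm)⟩

theorem eq_zero_of_aeval_gen_eq_zero {d : ℤ} (hd : 0 < d) {r : ℤ[X]} (hr : r.degree ≤ 1)
    (h : aeval (gen d) r = 0) : r = 0 := by
  replace h := congrArg (algebraMap (Mfield d) ℂ) h
  rw [← aeval_algebraMap_apply, map_zero, eq_X_add_C_of_degree_le_one hr] at h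
  rw [eq_X_add_C_of_degree_le_one hr]
  have hsqrt : √(d : ℝ) ≠ 0 := (Real.sqrt_pos.2 (by exact_mod_cast hd)).ne'
  have h0 : r.coeff 0 = 0 := by simpa [coe_gen] using congrArg Complex.re h
  have h1 : r.coeff 1 = 0 ∨ √(d : ℝ) = 0 := by simpa [coe_gen] using congrArg Complex.im h
  simp [h0, h1.resolve_right hsqrt]

theorem ker_aeval_gen_le {d : ℤ} (hd : 0 < d) {B : Type*} [CommRing B] {y : B}
    (hy : y ^ 2 + d = 0) :
    RingHom.ker (aeval (R := ℤ) (gen d)).toRingHom ≤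
      RingHom.ker (aeval (R := ℤ) y).toRingHom := by
  have hg : gen d ^ 2 + d = 0 := by
    refine Subtype.ext ?_
    push_cast [coe_gen]
    rw [mul_pow, ← Complex.ofReal_pow, Real.sq_sqrt (by exact_mod_cast hd.le)]
    simp
  refine ker_le_ker_of_monic (F := X ^ 2 + C d) (monic_X_pow_add_C _ two_ne_zero)
    (by simpa using hg) (by simpa using hy) fun r hr hfr ↦ ?_
  rw [degree_X_pow_add_C two_pos] at hr
  simp [eq_zero_of_aeval_gen_eq_zero hd (Order.le_of_lt_succ hr) hfr]

end Mfield

theorem stmt_10_general (d : ℤ) (hd : 0 < d)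
    (t : Mfield d)
    (htZM : (t : ℂ) ∈ Subring.closure {(Complex.I * (Real.sqrt (d : ℝ) : ℂ) : ℂ)})
    (hirr : Irreducible (X ^ 4 - C (t ^ 2) * X ^ 2 + 1 : Polynomial (Mfield d)))
    (ξ : ℂ) (hξ : ξ ^ 4 - (t : ℂ) ^ 2 * ξ ^ 2 + 1 = 0) :
    ¬ ∃ α ∈ Subring.closure {(Complex.I * (Real.sqrt (d : ℝ) : ℂ) : ℂ), ξ},
        Subring.closure {α} =
          Subring.closure {(Complex.I * (Real.sqrt (d : ℝ) : ℂ) : ℂ), ξ} := by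
  rintro ⟨α, hα, hgen⟩
  obtain ⟨p, hp⟩ := Mfield.exists_aeval_gen_eq htZM
  obtain ⟨y, x, hy, hx, hy2, hx4⟩ :=
    TrivSqZeroExt.exists_sq_add_eq_zero_and_quartic_eq_zero
      (k := AlgebraicClosure (ZMod 2)) d p
  set f :=
    eval₂RingHom ((algebraMap (Mfield d) ℂ).comp (aeval (R := ℤ) (Mfield.gen d)).toRingHom) ξ
  set ψ := eval₂RingHom (aeval (R := ℤ) y).toRingHom x
  have hF : (X ^ 4 - C (p ^ 2) * X ^ 2 + 1).eval₂ (aeval (R := ℤ) y).toRingHom x = 0 := by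
    rw [← hx4]
    simp only [eval₂_add, eval₂_sub, eval₂_mul, eval₂_pow, eval₂_X, eval₂_C, eval₂_one,
      map_pow]
    rfl
  have hker : RingHom.ker f ≤ RingHom.ker ψ :=
    ker_eval₂RingHom_le_of_irreducible (F := X ^ 4 - C (p ^ 2) * X ^ 2 + 1)
      (Mfield.ker_aeval_gen_le hd hy2) (by monicity!) (by convert hirr; simp [hp])
      (by simpa [hp] using hξ) hF
  have hfC : f (C X) = Complex.I * (√(d : ℝ) : ℂ) := by simp [f, Mfield.coe_gen]
  have hfX : f X = ξ := by simp [f]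
  obtain ⟨A, rfl⟩ : α ∈ f.range := (Subring.closure_le (t := f.range)).2
    (Set.insert_subset ⟨C X, hfC⟩ (Set.singleton_subset_iff.2 ⟨X, hfX⟩)) hα
  have hmem (z) (hz : f z ∈ Subring.closure {f A}) : ψ z ∈ Subring.closure {ψ A} := by
    simpa using RingHom.mem_closure_image_of_ker_le hker (s := {A}) (by simpa using hz)
  have hyA := hmem (C X) (hgen ▸ hfC ▸ Subring.subset_closure (Set.mem_insert _ _))
  have hxA := hmem X (hgen ▸ hfX ▸ Subring.subset_closure (Set.mem_insert_of_mem _ rfl))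
  simpa [ψ, hx, hy] using TrivSqZeroExt.snd_cross_eq_of_mem_closure_singleton hxA hyA

/-- Let `d > 0` be squarefree with `−d ≡ 2, 3 (mod 4)`, `M = ℚ(i√d)`
with ring of integers `Z_M = ℤ[i√d]`, and `t ∈ Z_M` with `|t| > 245` such that
`x⁴ − t²x² + 1` is irreducible over `M`. If `ξ` is a root of this polynomial, then
the order `O = Z_M[ξ]` admits no power integral basis: no `α ∈ O` has `ℤ[α] = O`. -/
theorem stmt_10 (d : ℤ) (hd : 0 < d) (hsq : Squarefree d)
    (hmod : (-d) % 4 = 2 ∨ (-d) % 4 = 3)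
    (t : Mfield d)
    (htZM : (t : ℂ) ∈ Subring.closure {(Complex.I * (Real.sqrt (d : ℝ) : ℂ) : ℂ)})
    (htabs : 245 < ‖(t : ℂ)‖)
    (hirr : Irreducible (X ^ 4 - C (t ^ 2) * X ^ 2 + 1 : Polynomial (Mfield d)))
    (ξ : ℂ) (hξ : ξ ^ 4 - (t : ℂ) ^ 2 * ξ ^ 2 + 1 = 0) :
    ¬ ∃ α ∈ Subring.closure {(Complex.I * (Real.sqrt (d : ℝ) : ℂ) : ℂ), ξ},
        Subring.closure {α} =
          Subring.closure {(Complex.I * (Real.sqrt (d : ℝ) : ℂ) : ℂ), ξ} :=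
  stmt_10_general d hd t htZM hirr ξ hξ
end

section
/- Let d > 0 be a squarefree integer with −d ≡ 2 or 3 (mod 4), and set M = Q(i√d) with ring of integers Z_M = Z[i√d]. Let t ∈ Z_M be a parameter with |t| > 1544803 such that the polynomial x⁴ − 4tx³ + (6t + 2)x² + 4tx + 1 is irreducible over M, let ξ be a root of this polynomial, and let O = Z_M[ξ] be the order generated by ξ over Z_M in the octic field K = M(ξ). Then O admits no power integral basis: there is no element α ∈ O with Z[α] = O. -/
open Polynomial

/-!
The obstruction is at the prime 2. Modulo 2 the quartic is `(x - 1)⁴`, so `(ξ - 1)⁴ ∈ 2O`, and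
`(ω - d)² = d² - d - 2dω ∈ 2O` for `ω = i√d`. Hence every element of `O = ℤ[ω, ξ]` is `c + β`
with `c ∈ ℤ` and `β` in the ideal `(2, ξ - 1, ω - d)`, and then `β⁵ ∈ 2O`. If `O = ℤ[α]`, then
also `O = ℤ[β]`, so the `𝔽₂`-vector space `O/2O` is spanned by `1, β, …, β⁴`. But `O` is a free
`ℤ`-module of rank 8 (`1, ω` times `1, ξ, ξ², ξ³`, by irreducibility of the quartic over `M`),
so `O/2O` has dimension 8.
-/

theorem Algebra.adjoin_singleton_sub_algebraMap {R A : Type*} [CommRing R] [Ring A]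
    [Algebra R A] (x : A) (c : R) :
    Algebra.adjoin R {x - algebraMap R A c} = Algebra.adjoin R {x} := by
  refine le_antisymm (Algebra.adjoin_le ?_) (Algebra.adjoin_le ?_) <;>
    rw [Set.singleton_subset_iff]
  · exact sub_mem (Algebra.self_mem_adjoin_singleton R x) (Subalgebra.algebraMap_mem _ c)
  · simpa using add_mem (Algebra.self_mem_adjoin_singleton R (x - algebraMap R A c))
      (Subalgebra.algebraMap_mem _ c)

theorem Subalgebra.adjoin_eq_top_of_adjoin_image_val {R A : Type*} [CommSemiring R]
    [Semiring A] [Algebra R A] {S : Subalgebra R A} {s : Set S}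
    (h : Algebra.adjoin R (Subtype.val '' s) = S) : Algebra.adjoin R s = ⊤ :=
  Subalgebra.map_injective (f := S.val) Subtype.val_injective <| by
    rw [AlgHom.map_adjoin, Algebra.map_top, Subalgebra.range_val]; exact h

section CommRing

variable {R : Type*} [CommRing R]

theorem exists_intCast_sub_mem_of_adjoin_eq_top {s : Set R} (hs : Algebra.adjoin ℤ s = ⊤)
    {I : Ideal R} (h : ∀ a ∈ s, ∃ c : ℤ, a - c ∈ I) (x : R) : ∃ c : ℤ, x - c ∈ I := by
  have hle : Algebra.adjoin ℤ s ≤ (⊥ : Subalgebra ℤ (R ⧸ I)).comap (Ideal.Quotient.mkₐ ℤ I) := by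
    refine Algebra.adjoin_le fun a ha => ?_
    obtain ⟨c, hc⟩ := h a ha
    exact Algebra.mem_bot.2 ⟨c, by simpa using (Ideal.Quotient.eq.2 hc).symm⟩
  obtain ⟨c, hc⟩ := Algebra.mem_bot.1 (hle (hs ▸ Algebra.mem_top : x ∈ Algebra.adjoin ℤ s))
  exact ⟨c, Ideal.Quotient.eq.1 (by simpa using hc.symm)⟩

theorem dvd_pow_of_mem_span_triple {a u w x : R} {m n : ℕ} (hu : a ∣ u ^ m) (hw : a ∣ w ^ n)
    (hx : x ∈ Ideal.span {a, u, w}) : a ∣ x ^ (m + n - 1) := by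
  obtain ⟨r, y, hy, rfl⟩ := Ideal.mem_span_insert.1 hx
  obtain ⟨s, t, rfl⟩ := Ideal.mem_span_pair.1 hy
  let π := Ideal.Quotient.mk (Ideal.span {a})
  have hπ {z : R} : π z = 0 ↔ a ∣ z := by
    rw [Ideal.Quotient.eq_zero_iff_mem, Ideal.mem_span_singleton]
  rw [← hπ, map_pow, map_add, map_add, map_mul, hπ.2 dvd_rfl, mul_zero, zero_add]
  refine (Commute.all _ _).add_pow_add_eq_zero_of_pow_eq_zero ?_ ?_ <;>
    rw [← map_pow, hπ, mul_pow]
  exacts [hu.mul_left _, hw.mul_left _]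

theorem exists_dvd_sub_intCast_pow_of_adjoin_pair {a y z : R} {cy cz : ℤ} {m n : ℕ}
    (h : Algebra.adjoin ℤ {y, z} = ⊤) (hy : a ∣ (y - cy) ^ m) (hz : a ∣ (z - cz) ^ n) (x : R) :
    ∃ c : ℤ, a ∣ (x - c) ^ (m + n - 1) := by
  obtain ⟨c, hc⟩ := exists_intCast_sub_mem_of_adjoin_eq_top h
    (I := Ideal.span {a, y - cy, z - cz})
    (by rintro _ (rfl | rfl)
        exacts [⟨cy, Ideal.subset_span (by simp)⟩, ⟨cz, Ideal.subset_span (by simp)⟩]) x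
  exact ⟨c, dvd_pow_of_mem_span_triple hy hz hc⟩

theorem finrank_le_of_adjoin_eq_top_of_dvd_pow [Module.Free ℤ R] [Module.Finite ℤ R] (p : ℕ)
    [Fact p.Prime] {x : R} (hx : Algebra.adjoin ℤ {x} = ⊤) {k : ℕ} (hk : (p : R) ∣ x ^ k) :
    Module.finrank ℤ R ≤ k := by
  let ι := Module.Free.ChooseBasisIndex ℤ R
  let b := Module.Free.chooseBasis ℤ R
  let φ : R →ₗ[ℤ] ι → ZMod p := (Int.castAddHom (ZMod p)).toIntLinearMap.compLeft ι ∘ₗ b.equivFun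
  have hφ : Function.Surjective φ := ZMod.intCast_surjective.comp_left.comp b.equivFun.surjective
  have hφ_pow {n : ℕ} (hn : k ≤ n) : φ (x ^ n) = 0 := by
    obtain ⟨r, hr⟩ := hk
    rw [← Nat.add_sub_cancel' hn, pow_add, hr, mul_assoc, ← nsmul_eq_mul, map_nsmul,
      ← Nat.cast_smul_eq_nsmul (ZMod p), ZMod.natCast_self, zero_smul]
  let G : Fin k → ι → ZMod p := fun i => φ (x ^ (i : ℕ))
  have hspan : Submodule.span (ZMod p) (Set.range G) = ⊤ := by
    have hle : Submodule.span ℤ (Submonoid.powers x : Set R) ≤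
        ((Submodule.span (ZMod p) (Set.range G)).restrictScalars ℤ).comap φ := by
      refine Submodule.span_le.2 ?_
      rintro _ ⟨n, rfl⟩
      rcases lt_or_ge n k with hn | hn
      · exact Submodule.subset_span ⟨⟨n, hn⟩, rfl⟩
      · simp [hφ_pow hn]
    rw [Submonoid.powers_eq_closure, ← Algebra.adjoin_eq_span, hx] at hle
    refine eq_top_iff.2 fun v _ => ?_
    obtain ⟨r, rfl⟩ := hφ v
    exact hle (Algebra.mem_top (R := ℤ))
  calc Module.finrank ℤ R = Module.finrank (ZMod p) (ι → ZMod p) := by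
        rw [Module.finrank_eq_card_chooseBasisIndex, Module.finrank_fintype_fun_eq_card]
    _ = (Set.range G).finrank (ZMod p) := by rw [Set.finrank, hspan, finrank_top]
    _ ≤ k := by simpa using finrank_range_le_card G

noncomputable def quartic (t : R) : R[X] :=
  X ^ 4 - C (4 * t) * X ^ 3 + C (6 * t + 2) * X ^ 2 + C (4 * t) * X + 1

theorem monic_quartic [Nontrivial R] (t : R) : (quartic t).Monic := by
  unfold quartic; monicity!

theorem natDegree_quartic [Nontrivial R] (t : R) : (quartic t).natDegree = 4 := by
  unfold quartic; compute_degree!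

theorem aeval_quartic {A : Type*} [CommRing A] [Algebra R A] (t : R) (x : A) :
    aeval x (quartic t) = x ^ 4 - 4 * algebraMap R A t * x ^ 3
      + (6 * algebraMap R A t + 2) * x ^ 2 + 4 * algebraMap R A t * x + 1 := by
  simp only [quartic, map_add, map_sub, map_mul, map_pow, map_one, aeval_X, aeval_C, map_ofNat]

theorem isIntegral_of_quartic [Nontrivial R] {t ξ : R} (ht : IsIntegral ℤ t)
    (hξ : ξ ^ 4 - 4 * t * ξ ^ 3 + (6 * t + 2) * ξ ^ 2 + 4 * t * ξ + 1 = 0) : IsIntegral ℤ ξ :=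
  isIntegral_trans (A := integralClosure ℤ R) ξ
    ⟨quartic ⟨t, ht⟩, monic_quartic _, by rw [← aeval_def, aeval_quartic]; exact hξ⟩

theorem two_dvd_sub_one_pow_four {t ξ : R}
    (hξ : ξ ^ 4 - 4 * t * ξ ^ 3 + (6 * t + 2) * ξ ^ 2 + 4 * t * ξ + 1 = 0) :
    (2 : R) ∣ (ξ - 1) ^ 4 :=
  ⟨(2 * t - 2) * ξ ^ 3 + (2 - 3 * t) * ξ ^ 2 - (2 * t + 2) * ξ, by linear_combination hξ⟩

theorem two_dvd_sub_sq_of_mul_self_eq_neg {d : ℤ} {ω : R} (hω : ω * ω = -d) :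
    (2 : R) ∣ (ω - d) ^ 2 := by
  obtain ⟨e, he⟩ := Int.even_mul_pred_self d
  have he' : (d : R) * (d - 1) = e + e := by exact_mod_cast congrArg (Int.cast : ℤ → R) he
  exact ⟨e - d * ω, by linear_combination hω + he'⟩

theorem adjoin_singleton_ne_top_of_quartic [Module.Free ℤ R] [Module.Finite ℤ R] {d : ℤ}
    {ω ξ t : R} (hgen : Algebra.adjoin ℤ {ω, ξ} = ⊤) (hω : ω * ω = -d)
    (hξ : ξ ^ 4 - 4 * t * ξ ^ 3 + (6 * t + 2) * ξ ^ 2 + 4 * t * ξ + 1 = 0)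
    (hrank : 5 < Module.finrank ℤ R) (x : R) : Algebra.adjoin ℤ {x} ≠ ⊤ := by
  intro hx
  obtain ⟨c, hc⟩ := exists_dvd_sub_intCast_pow_of_adjoin_pair (cz := 1) hgen
    (two_dvd_sub_sq_of_mul_self_eq_neg hω) (by simpa using two_dvd_sub_one_pow_four hξ) x
  rw [← Algebra.adjoin_singleton_sub_algebraMap x c, eq_intCast] at hx
  exact (finrank_le_of_adjoin_eq_top_of_dvd_pow 2 hx hc).not_gt hrank

end CommRing

noncomputable def sqrtNeg (d : ℤ) : ℂ := Complex.I * Real.sqrt d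

section SqrtNeg

variable {d : ℤ}

theorem sqrtNeg_mul_self (hd : 0 ≤ d) : sqrtNeg d * sqrtNeg d = -d := by
  have h : (Real.sqrt d : ℂ) * Real.sqrt d = d := by
    exact_mod_cast Real.mul_self_sqrt (by exact_mod_cast hd)
  rw [sqrtNeg]
  linear_combination Complex.I ^ 2 * h + (d : ℂ) * Complex.I_sq

theorem isIntegral_sqrtNeg (hd : 0 ≤ d) : IsIntegral ℤ (sqrtNeg d) :=
  ⟨X ^ 2 + C d, monic_X_pow_add_C _ two_ne_zero, by
    rw [eval₂_add, eval₂_X_pow, eval₂_C, sq, sqrtNeg_mul_self hd]; simp⟩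

theorem linearIndependent_one_sqrtNeg (hd : 0 < d) : LinearIndependent ℤ ![1, sqrtNeg d] := by
  refine LinearIndependent.pair_iff.2 fun a b hab => ⟨?_, ?_⟩
  · simpa [sqrtNeg] using congrArg Complex.re hab
  · have him : b = 0 ∨ Real.sqrt d = 0 := by simpa [sqrtNeg] using congrArg Complex.im hab
    exact him.resolve_right (Real.sqrt_pos.2 (Int.cast_pos.2 hd)).ne'

theorem sqrtNeg_mem_Mfield : sqrtNeg d ∈ Mfield d :=
  IntermediateField.subset_adjoin ℚ _ (Set.mem_singleton _)

theorem finite_adjoin_sqrtNeg (hd : 0 ≤ d) {t ξ : ℂ} (ht : t ∈ Subring.closure {sqrtNeg d})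
    (hξ : ξ ^ 4 - 4 * t * ξ ^ 3 + (6 * t + 2) * ξ ^ 2 + 4 * t * ξ + 1 = 0) :
    Module.Finite ℤ (Algebra.adjoin ℤ {sqrtNeg d, ξ}) := by
  have hξint : IsIntegral ℤ ξ := isIntegral_of_quartic (IsIntegral.of_mem_closure' _
    (fun _ h => Set.eq_of_mem_singleton h ▸ isIntegral_sqrtNeg hd) _ ht) hξ
  exact Algebra.finite_adjoin_of_finite_of_isIntegral (Set.toFinite _)
    (by rintro _ (rfl | rfl); exacts [isIntegral_sqrtNeg hd, hξint])

theorem eight_le_finrank_adjoin_sqrtNeg (hd : 0 < d) {t : Mfield d}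
    (hirr : Irreducible (quartic t)) {ξ : ℂ} (hξ : aeval ξ (quartic t) = 0)
    [Module.Finite ℤ (Algebra.adjoin ℤ {sqrtNeg d, ξ})] :
    8 ≤ Module.finrank ℤ (Algebra.adjoin ℤ {sqrtNeg d, ξ}) := by
  set O := Algebra.adjoin ℤ {sqrtNeg d, ξ}
  have hdeg : (minpoly (Mfield d) ξ).natDegree = 4 := by
    rw [← minpoly.eq_of_irreducible_of_monic hirr hξ (monic_quartic t), natDegree_quartic]
  let b : Fin 2 → Mfield d := ![1, ⟨sqrtNeg d, sqrtNeg_mem_Mfield⟩]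
  have hb : LinearIndependent ℤ b := LinearIndependent.pair_iff.2 fun a c h =>
    LinearIndependent.pair_iff.1 (linearIndependent_one_sqrtNeg hd) a c
      (by simpa [b] using congrArg Subtype.val h)
  have hbO (j : Fin 2) : (b j : ℂ) ∈ O := by
    fin_cases j
    exacts [one_mem O, Algebra.subset_adjoin (Set.mem_insert _ _)]
  have hξO : ξ ∈ O := Algebra.subset_adjoin (Set.mem_insert_of_mem _ rfl)
  let v : Fin 2 × Fin (minpoly (Mfield d) ξ).natDegree → O := fun p =>
    ⟨b p.1 • ξ ^ (p.2 : ℕ), by rw [Algebra.smul_def]; exact mul_mem (hbO p.1) (pow_mem hξO _)⟩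
  have hvℂ := linearIndependent_smul (R := ℤ) (A := ℂ) hb (linearIndependent_pow ξ)
  have hv : LinearIndependent ℤ v :=
    LinearIndependent.of_comp O.val.toLinearMap (hvℂ : LinearIndependent ℤ fun p => (v p : ℂ))
  simpa [hdeg] using hv.fintype_card_le_finrank

end SqrtNeg

theorem stmt_11_general (d : ℤ) (hd : 0 < d)
    (t : Mfield d)
    (htZM : (t : ℂ) ∈ Subring.closure {(Complex.I * (Real.sqrt (d : ℝ) : ℂ) : ℂ)})
    (hirr : Irreducible (X ^ 4 - C (4 * t) * X ^ 3 + C (6 * t + 2) * X ^ 2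
      + C (4 * t) * X + 1 : Polynomial (Mfield d)))
    (ξ : ℂ) (hξ : ξ ^ 4 - 4 * (t : ℂ) * ξ ^ 3 + (6 * (t : ℂ) + 2) * ξ ^ 2
      + 4 * (t : ℂ) * ξ + 1 = 0) :
    ¬ ∃ α ∈ Subring.closure {(Complex.I * (Real.sqrt (d : ℝ) : ℂ) : ℂ), ξ},
        Subring.closure {α} =
          Subring.closure {(Complex.I * (Real.sqrt (d : ℝ) : ℂ) : ℂ), ξ} := by
  change (t : ℂ) ∈ Subring.closure {sqrtNeg d} at htZM
  change ¬ ∃ α ∈ Subring.closure {sqrtNeg d, ξ},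
    Subring.closure {α} = Subring.closure {sqrtNeg d, ξ}
  rintro ⟨α, hαO, hα⟩
  replace hαO : α ∈ Algebra.adjoin ℤ {sqrtNeg d, ξ} := by rw [Algebra.adjoin_int]; exact hαO
  replace hα : Algebra.adjoin ℤ {α} = Algebra.adjoin ℤ {sqrtNeg d, ξ} := by
    rw [Algebra.adjoin_int, Algebra.adjoin_int, hα]
  have htO : (t : ℂ) ∈ Algebra.adjoin ℤ {sqrtNeg d, ξ} :=
    Algebra.adjoin_mono (by simp) (show (t : ℂ) ∈ Algebra.adjoin ℤ {sqrtNeg d} by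
      rw [Algebra.adjoin_int]; exact htZM)
  have := finite_adjoin_sqrtNeg hd.le htZM hξ
  refine adjoin_singleton_ne_top_of_quartic (ω := ⟨sqrtNeg d, Algebra.subset_adjoin (by simp)⟩)
    (ξ := ⟨ξ, Algebra.subset_adjoin (by simp)⟩) (t := ⟨t, htO⟩)
    (Subalgebra.adjoin_eq_top_of_adjoin_image_val (by rw [Set.image_pair]))
    (Subtype.ext (sqrtNeg_mul_self hd.le)) (Subtype.ext (by push_cast; exact hξ))
    ((by norm_num : 5 < 8).trans_le
      (eight_le_finrank_adjoin_sqrtNeg hd hirr (by rw [aeval_quartic]; simpa using hξ)))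
    ⟨α, hαO⟩ (Subalgebra.adjoin_eq_top_of_adjoin_image_val (by rwa [Set.image_singleton]))

/-- Let `d > 0` be squarefree with `−d ≡ 2, 3 (mod 4)`, `M = ℚ(i√d)`
with ring of integers `Z_M = ℤ[i√d]`, and `t ∈ Z_M` with `|t| > 1544803` such that
`x⁴ − 4tx³ + (6t + 2)x² + 4tx + 1` is irreducible over `M`. If `ξ` is a root of this
polynomial, then the order `O = Z_M[ξ]` admits no power integral basis: no `α ∈ O`
has `ℤ[α] = O`. -/
theorem stmt_11 (d : ℤ) (hd : 0 < d) (hsq : Squarefree d)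
    (hmod : (-d) % 4 = 2 ∨ (-d) % 4 = 3)
    (t : Mfield d)
    (htZM : (t : ℂ) ∈ Subring.closure {(Complex.I * (Real.sqrt (d : ℝ) : ℂ) : ℂ)})
    (htabs : 1544803 < ‖(t : ℂ)‖)
    (hirr : Irreducible (X ^ 4 - C (4 * t) * X ^ 3 + C (6 * t + 2) * X ^ 2
      + C (4 * t) * X + 1 : Polynomial (Mfield d)))
    (ξ : ℂ) (hξ : ξ ^ 4 - 4 * (t : ℂ) * ξ ^ 3 + (6 * (t : ℂ) + 2) * ξ ^ 2
      + 4 * (t : ℂ) * ξ + 1 = 0) :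
    ¬ ∃ α ∈ Subring.closure {(Complex.I * (Real.sqrt (d : ℝ) : ℂ) : ℂ), ξ},
        Subring.closure {α} =
          Subring.closure {(Complex.I * (Real.sqrt (d : ℝ) : ℂ) : ℂ), ξ} :=
  stmt_11_general d hd t htZM hirr ξ hξ
end
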